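/- arXiv:2106.09247 — 3 statements merged into one kernel-verified Lean document; each statement's English description precedes it below -/
import Mathlib

section
/- Let K be a field, L/K a field extension, p ∈ K[X] a monic polynomial of degree n that splits over L with roots x_1,…,x_n ∈ L (with multiplicity), and let a_0,…,a_{n−1} ∈ K. Then every coefficient of the Tschirnhaus transform ∏_{i=1}^n (Y − (a_0 + a_1 x_i + ⋯ + a_{n−1} x_i^{n−1})) ∈ L[Y] lies in the image of K under the algebra map K → L; i.e., the transformed equation again has coefficients in the base field K. -/
open Polynomial

/-- If `p ∈ K[X]` is monic of degree `n` and splits over `L` with roots `x 1, …, x n`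
(with multiplicity), and `a 0, …, a (n-1) ∈ K`, then every coefficient of the
Tschirnhaus transform `∏ i, (Y - (a 0 + a 1 * x i + ⋯ + a (n-1) * x i ^ (n-1)))`
lies in the image of `K` in `L`. -/
theorem tschirnhaus_coeff_mem_base (K L : Type*) [Field K] [Field L] [Algebra K L]
    (n : ℕ) (p : K[X]) (hmonic : p.Monic) (hdeg : p.natDegree = n)
    (x : Fin n → L)
    (hsplit : p.map (algebraMap K L) = ∏ i : Fin n, (X - Polynomial.C (x i)))
    (a : Fin n → K) (j : ℕ) :
    (∏ i : Fin n,
      (X - Polynomial.C (∑ k : Fin n, algebraMap K L (a k) * x i ^ (k : ℕ)))).coeff j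
      ∈ (algebraMap K L).range := by
  classical
  set q : Fin n → MvPolynomial (Fin n) K :=
    fun i => ∑ k : Fin n, MvPolynomial.C (a k) * (MvPolynomial.X i) ^ (k : ℕ) with hq
  set F : Polynomial (MvPolynomial (Fin n) K) :=
    ∏ i : Fin n, (Polynomial.X - Polynomial.C (q i)) with hF
  -- the coefficient is a symmetric polynomial in the roots
  have hFsym : MvPolynomial.IsSymmetric (F.coeff j) := by
    intro e
    have hmap : F.map ((MvPolynomial.rename e : _ →ₐ[K] _) : _ →+* _) = F := by
      rw [hF, Polynomial.map_prod]
      have h1 : ∀ i, (Polynomial.X - Polynomial.C (q i)).map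
          ((MvPolynomial.rename e : _ →ₐ[K] _) : _ →+* _)
          = (Polynomial.X - Polynomial.C (q (e i))) := by
        intro i
        rw [Polynomial.map_sub, Polynomial.map_X, Polynomial.map_C]
        have : MvPolynomial.rename e (q i) = q (e i) := by simp [hq]
        exact congrArg (fun z => Polynomial.X - Polynomial.C z) this
      simp_rw [h1]
      exact Equiv.prod_comp e (fun i => Polynomial.X - Polynomial.C (q i))
    calc MvPolynomial.rename e (F.coeff j)
        = (F.map ((MvPolynomial.rename e : _ →ₐ[K] _) : _ →+* _)).coeff j := by
          rw [Polynomial.coeff_map]; rfl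
      _ = F.coeff j := by rw [hmap]
  -- elementary symmetric functions of the roots lie in the base field
  have hesymm : ∀ m : ℕ, m ≤ n →
      (MvPolynomial.aeval x) (MvPolynomial.esymm (Fin n) K m) ∈ (algebraMap K L).range := by
    intro m hm
    rw [MvPolynomial.aeval_esymm_eq_multiset_esymm]
    set s : Multiset L := Finset.univ.val.map x with hs
    have hcard : Multiset.card s = n := by simp [hs]
    have hprod : (s.map fun t => Polynomial.X - Polynomial.C t).prod
        = p.map (algebraMap K L) := by
      rw [hsplit, hs, Multiset.map_map, Finset.prod]
      rfl
    have hco := Multiset.prod_X_sub_C_coeff s (k := n - m) (by omega)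
    rw [hprod, hcard] at hco
    have hnm : n - (n - m) = m := by omega
    rw [hnm, Polynomial.coeff_map] at hco
    have : s.esymm m = (-1 : L) ^ m * algebraMap K L (p.coeff (n - m)) := by
      have := congrArg (fun z => (-1 : L) ^ m * z) hco
      rw [← mul_assoc, ← mul_pow] at this
      simp at this
      linear_combination -this
    rw [this]
    exact ⟨(-1 : K) ^ m * p.coeff (n - m), by push_cast [map_mul, map_pow]; ring⟩
  -- express the coefficient via the fundamental theorem of symmetric polynomials
  obtain ⟨g, hg⟩ := MvPolynomial.esymmAlgHom_surjective (σ := Fin n) (n := n) K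
    (by simp) ⟨F.coeff j, hFsym⟩
  have hgval : F.coeff j
      = MvPolynomial.aeval (fun i : Fin n => MvPolynomial.esymm (Fin n) K ((i : ℕ) + 1)) g := by
    have := congrArg Subtype.val hg
    rw [MvPolynomial.esymmAlgHom_apply] at this
    exact this.symm
  -- the target coefficient is the evaluation of `F.coeff j` at `x`
  have hcoeff : (∏ i : Fin n,
      (X - Polynomial.C (∑ k : Fin n, algebraMap K L (a k) * x i ^ (k : ℕ)))).coeff j
      = MvPolynomial.aeval x (F.coeff j) := by
    have hFmap : F.map ((MvPolynomial.aeval x : MvPolynomial (Fin n) K →ₐ[K] L) : _ →+* _)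
        = ∏ i : Fin n,
          (X - Polynomial.C (∑ k : Fin n, algebraMap K L (a k) * x i ^ (k : ℕ))) := by
      rw [hF, Polynomial.map_prod]
      congr 1
      funext i
      rw [Polynomial.map_sub, Polynomial.map_X, Polynomial.map_C]
      have : MvPolynomial.aeval x (q i) = ∑ k : Fin n, algebraMap K L (a k) * x i ^ (k : ℕ) := by
        simp [hq]
      exact congrArg (fun z => Polynomial.X - Polynomial.C z) this
    rw [← hFmap, Polynomial.coeff_map]
    rfl
  rw [hcoeff, hgval, MvPolynomial.comp_aeval_apply]
  -- evaluate `g` at the elementary symmetric values, all of which lie in the base field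
  set v : Fin n → L := fun i =>
    MvPolynomial.aeval x (MvPolynomial.esymm (Fin n) K ((i : ℕ) + 1)) with hv
  have hvmem : ∀ i, v i ∈ (⊥ : Subalgebra K L) := by
    intro i
    rw [Algebra.mem_bot]
    exact hesymm (i + 1) i.2
  set v' : Fin n → (⊥ : Subalgebra K L) := fun i => ⟨v i, hvmem i⟩ with hv'
  have : MvPolynomial.aeval v g = ((MvPolynomial.aeval v' g : (⊥ : Subalgebra K L)) : L) := by
    rw [show ((MvPolynomial.aeval v' g : (⊥ : Subalgebra K L)) : L)
        = (⊥ : Subalgebra K L).val (MvPolynomial.aeval v' g) from rfl,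
      MvPolynomial.comp_aeval_apply]
    rfl
  rw [this]
  rw [RingHom.mem_range, ← Set.mem_range, ← Algebra.mem_bot]
  exact SetLike.coe_mem _
end

section
/- (Hermite) Let z_1,…,z_n ∈ ℂ be n distinct complex numbers whose multiset is closed under complex conjugation, and suppose exactly 2λ of them are non-real. Define Q : ℝ^n → ℝ by Q(a_0,…,a_{n−1}) = Re( Σ_{i=1}^n (a_0 + a_1 z_i + ⋯ + a_{n−1} z_i^{n−1})² ) (the sum is in fact real). Then there is a basis v_1,…,v_n of ℝ^n such that Q(c_1 v_1 + ⋯ + c_n v_n) = c_1² + ⋯ + c_{n−λ}² − c_{n−λ+1}² − ⋯ − c_n² for all c ∈ ℝ^n; i.e., when Q is written as a sum of real squares, exactly λ of the squares carry the sign −, where 2λ is the number of imaginary roots. -/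
/-!
Write `L_z a = a₀ + a₁ z + ⋯ + a_{n-1} z^{n-1}`, so that `L_{z̄} a = conj (L_z a)` for real `a`.
A real root contributes `(L_z a)²`, the square of a real linear form, and a conjugate pair
`z, z̄` with `Im z > 0` contributes `2 Re ((L_z a)²) = (√2 Re L_z a)² - (√2 Im L_z a)²`.
Attaching the first square to `z` and the second to `z̄` gives `n` real linear forms which
determine every `L_{z_i} a`, hence `a`, since the Vandermonde matrix of distinct nodes is
invertible. In these coordinates `Q` is a sum of squares with one minus sign for each root in the
lower half-plane, and there are `λ` of those.
-/

open Complex Finset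
open scoped ComplexConjugate

theorem Equiv.Perm.exists_forall_iff_of_card_filter_eq {α : Type*} [Fintype α] {p q : α → Prop}
    [DecidablePred p] [DecidablePred q] (h : #{a | p a} = #{a | q a}) :
    ∃ τ : Equiv.Perm α, ∀ a, q (τ a) ↔ p a := by
  have hc : Fintype.card {a // p a} = Fintype.card {a // q a} := by
    simpa only [Fintype.card_subtype] using h
  have hc' : Fintype.card {a // ¬p a} = Fintype.card {a // ¬q a} := by
    simp only [Fintype.card_subtype_compl, hc]
  refine ⟨(Fintype.equivOfCardEq hc).subtypeCongr (Fintype.equivOfCardEq hc'), fun a => ?_⟩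
  by_cases ha : p a
  · simp [Equiv.subtypeCongr, ha, (Fintype.equivOfCardEq hc ⟨a, ha⟩).2]
  · simp [Equiv.subtypeCongr, ha, (Fintype.equivOfCardEq hc' ⟨a, ha⟩).2]

theorem exists_basis_of_eq_sum_signed_sq {V : Type*} [AddCommGroup V] [Module ℝ V] {n lam : ℕ}
    (Q : V → ℝ) (F : V ≃ₗ[ℝ] (Fin n → ℝ)) (neg : Fin n → Prop) [DecidablePred neg]
    (hneg : #{i | neg i} = lam)
    (hQ : ∀ a, Q a = ∑ i, if neg i then -F a i ^ 2 else F a i ^ 2) :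
    ∃ v : Module.Basis (Fin n) ℝ V, ∀ c : Fin n → ℝ,
      Q (∑ j, c j • v j) = ∑ j : Fin n, if (j : ℕ) < n - lam then c j ^ 2 else -c j ^ 2 := by
  have hlam : lam ≤ n := hneg ▸ (card_filter_le _ _).trans_eq (card_fin n)
  have htail : #{j : Fin n | ¬(j : ℕ) < n - lam} = #{i | neg i} := by
    rw [filter_not, card_sdiff_of_subset (filter_subset _ _), Fin.card_filter_val_lt, card_univ,
      Fintype.card_fin]
    omega
  obtain ⟨τ, hτ⟩ := Equiv.Perm.exists_forall_iff_of_card_filter_eq htail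
  let G : V ≃ₗ[ℝ] (Fin n → ℝ) := F.trans (LinearEquiv.funCongrLeft ℝ ℝ τ)
  refine ⟨.ofEquivFun G, fun c => ?_⟩
  rw [← Module.Basis.equivFun_symm_apply, Module.Basis.equivFun_ofEquivFun, hQ,
    ← Equiv.sum_comp τ]
  refine sum_congr rfl fun j _ => ?_
  have hc : F (G.symm c) (τ j) = c j := congrFun (G.apply_symm_apply c) j
  by_cases hj : (j : ℕ) < n - lam <;> simp [hτ, hj, hc]

theorem sum_comp_eq_zero_of_map_conj_eq_neg {ι M : Type*} [Fintype ι] [AddCommGroup M]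
    [IsAddTorsionFree M] {z : ι → ℂ} (hz : Function.Injective z)
    (hconj : ∀ i, ∃ j, z j = conj (z i)) {f : ℂ → M} (hf : ∀ x, f (conj x) = -f x) :
    ∑ i, f (z i) = 0 := by
  choose σ hσ using hconj
  refine sum_ninvolution σ (fun i => by rw [hσ, hf, add_neg_cancel]) (fun i hi hfix => hi ?_)
    (fun _ => mem_univ _) (fun i => hz (by rw [hσ, hσ, conj_conj]))
  rw [← self_eq_neg, ← hf, ← hσ, hfix]

theorem two_mul_card_im_neg {ι : Type*} [Fintype ι] {z : ι → ℂ} (hz : Function.Injective z)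
    (hconj : ∀ i, ∃ j, z j = conj (z i)) :
    2 * #{i | (z i).im < 0} = #{i | (z i).im ≠ 0} := by
  classical
  have hbal : ∑ i, ((if 0 < (z i).im then 1 else 0) - (if (z i).im < 0 then 1 else 0) : ℤ) = 0 :=
    sum_comp_eq_zero_of_map_conj_eq_neg hz hconj
      (f := fun x => (if 0 < x.im then 1 else 0) - (if x.im < 0 then 1 else 0)) fun x => by
        simp only [conj_im, neg_pos, Left.neg_neg_iff, neg_sub]
  have hpos : #{i | 0 < (z i).im} = #{i | (z i).im < 0} := by
    rw [sum_sub_distrib, sub_eq_zero] at hbal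
    simp only [card_filter]
    exact_mod_cast hbal
  have hsplit : #{i | (z i).im ≠ 0} = #{i | (z i).im < 0} + #{i | 0 < (z i).im} := by
    rw [← card_union_of_disjoint (disjoint_filter.2 fun _ _ h h' => h.not_gt h'), ← filter_or]
    simp only [ne_iff_lt_or_gt]
  omega

noncomputable def evalRealCoeffs (n : ℕ) (z : ℂ) : (Fin n → ℝ) →ₗ[ℝ] ℂ where
  toFun a := ∑ k : Fin n, (a k : ℂ) * z ^ (k : ℕ)
  map_add' a b := by simp [add_mul, sum_add_distrib]
  map_smul' c a := by simp [smul_sum, real_smul, mul_assoc]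

theorem evalRealCoeffs_conj (n : ℕ) (z : ℂ) (a : Fin n → ℝ) :
    evalRealCoeffs n (conj z) a = conj (evalRealCoeffs n z a) := by
  simp [evalRealCoeffs]

noncomputable def hermiteCoord (n : ℕ) (z : ℂ) : (Fin n → ℝ) →ₗ[ℝ] ℝ :=
  if z.im < 0 then √2 • imLm ∘ₗ evalRealCoeffs n z
  else if 0 < z.im then √2 • reLm ∘ₗ evalRealCoeffs n z
  else reLm ∘ₗ evalRealCoeffs n z

theorem hermiteCoord_apply (n : ℕ) (z : ℂ) (a : Fin n → ℝ) :
    hermiteCoord n z a =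
      if z.im < 0 then √2 * (evalRealCoeffs n z a).im
      else if 0 < z.im then √2 * (evalRealCoeffs n z a).re
      else (evalRealCoeffs n z a).re := by
  unfold hermiteCoord
  split_ifs <;> rfl

theorem re_sum_sq_evalRealCoeffs {ι : Type*} [Fintype ι] {n : ℕ} {z : ι → ℂ}
    (hz : Function.Injective z) (hconj : ∀ i, ∃ j, z j = conj (z i)) (a : Fin n → ℝ) :
    (∑ i, evalRealCoeffs n (z i) a ^ 2).re =
      ∑ i, if (z i).im < 0 then -hermiteCoord n (z i) a ^ 2 else hermiteCoord n (z i) a ^ 2 := by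
  rw [re_sum, ← sub_eq_zero, ← sum_sub_distrib]
  -- the defect between the two sides is odd under conjugation, so conjugate roots cancel it
  refine sum_comp_eq_zero_of_map_conj_eq_neg hz hconj
    (f := fun x => (evalRealCoeffs n x a ^ 2).re -
      if x.im < 0 then -hermiteCoord n x a ^ 2 else hermiteCoord n x a ^ 2) fun x => ?_
  have hsq (w : ℂ) : (w ^ 2).re = w.re ^ 2 - w.im ^ 2 := by rw [sq, mul_re, sq, sq]
  have h2 : √2 ^ 2 = 2 := Real.sq_sqrt zero_le_two
  simp only [hermiteCoord_apply, evalRealCoeffs_conj, hsq, conj_im, conj_re, neg_sq]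
  rcases lt_trichotomy x.im 0 with hx | hx | hx
  · simp only [hx, neg_pos, Left.neg_neg_iff, hx.not_gt, if_true, if_false, mul_pow, h2]
    ring
  · have hreal : (evalRealCoeffs n x a).im = 0 := by
      have hL := evalRealCoeffs_conj n x a
      rwa [conj_eq_iff_im.2 hx, eq_comm, conj_eq_iff_im] at hL
    simp [hx, hreal]
  · simp only [hx, neg_pos, hx.not_gt, neg_lt_zero, if_true, if_false, mul_pow, h2]
    ring

theorem evalRealCoeffs_eq_zero_of_hermiteCoord_eq_zero {n : ℕ} {x : ℂ} {a : Fin n → ℝ}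
    (h : hermiteCoord n x a = 0) (hc : hermiteCoord n (conj x) a = 0) :
    evalRealCoeffs n x a = 0 := by
  have h2 : √2 ≠ 0 := by positivity
  simp only [hermiteCoord_apply, evalRealCoeffs_conj, conj_im, conj_re] at h hc
  rcases lt_trichotomy x.im 0 with hx | hx | hx
  · simp_all [hx.not_gt, Complex.ext_iff]
  · have hL := evalRealCoeffs_conj n x a
    rw [conj_eq_iff_im.2 hx, eq_comm, conj_eq_iff_im] at hL
    simp_all [Complex.ext_iff]
  · simp_all [hx.not_gt, Complex.ext_iff]

theorem injective_pi_hermiteCoord {n : ℕ} {z : Fin n → ℂ} (hz : Function.Injective z)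
    (hconj : ∀ i, ∃ j, z j = conj (z i)) :
    Function.Injective (LinearMap.pi fun i => hermiteCoord n (z i)) := by
  rw [← LinearMap.ker_eq_bot, LinearMap.ker_eq_bot']
  intro a ha
  have hL (i : Fin n) : evalRealCoeffs n (z i) a = 0 := by
    obtain ⟨j, hj⟩ := hconj i
    exact evalRealCoeffs_eq_zero_of_hermiteCoord_eq_zero (congrFun ha i) (hj ▸ congrFun ha j)
  have ha' : (fun k => (a k : ℂ)) = 0 := Matrix.eq_zero_of_forall_index_sum_mul_pow_eq_zero hz hL
  funext k
  exact ofReal_eq_zero.1 (congrFun ha' k)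

/-- **Hermite.** Let `z 1, …, z n` be distinct complex numbers whose set is closed under
complex conjugation, exactly `2λ` of which are non-real. Then the Hermite form
`Q a = Re (Σ_i (a₀ + a₁ z_i + ⋯ + a_{n-1} z_i^{n-1})²)` can be written, in a suitable
basis of `ℝⁿ`, as a sum of `n - λ` positive squares and `λ` negative squares. -/
theorem hermite_form_signature (n lam : ℕ) (z : Fin n → ℂ)
    (hz : Function.Injective z)
    (hconj : ∀ i : Fin n, ∃ j : Fin n, z j = starRingEnd ℂ (z i))
    (hlam : ({i : Fin n | (z i).im ≠ 0} : Finset (Fin n)).card = 2 * lam)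
    (Q : (Fin n → ℝ) → ℝ)
    (hQ : ∀ a : Fin n → ℝ,
      Q a = (∑ i : Fin n, (∑ k : Fin n, (a k : ℂ) * z i ^ (k : ℕ)) ^ 2).re) :
    ∃ v : Module.Basis (Fin n) ℝ (Fin n → ℝ),
      ∀ c : Fin n → ℝ,
        Q (∑ j : Fin n, c j • v j)
          = ∑ j : Fin n, (if (j : ℕ) < n - lam then (c j) ^ 2 else -(c j) ^ 2) := by
  have hneg : #{i | (z i).im < 0} = lam := by
    have := two_mul_card_im_neg hz hconj
    omega
  refine exists_basis_of_eq_sum_signed_sq Q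
    (LinearEquiv.ofInjectiveEndo _ (injective_pi_hermiteCoord hz hconj)) _ hneg fun a => ?_
  exact (hQ a).trans (re_sum_sq_evalRealCoeffs hz hconj a)
end

section
/- Let K be a field of characteristic ≠ 2, let A, B be symmetric m × m matrices over K with B invertible, and suppose the polynomial det(X·B − A) ∈ K[X] has m distinct roots in K. Then A and B are simultaneously congruent to diagonal matrices: there exists an invertible m × m matrix P over K such that both Pᵀ A P and Pᵀ B P are diagonal. (This is the self-conjugate pentahedron common to the two quadrics φ_2 and ψ_2 in the case m = 5, yielding the normal forms φ_2 = Σ a_i z_i², ψ_2 = Σ b_i z_i².) -/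
open Polynomial Matrix

/-- If `A, B` are symmetric `m × m` matrices over a field of characteristic `≠ 2`, `B` is
invertible, and `det (X·B − A)` has `m` distinct roots in `K`, then `A` and `B` are
simultaneously congruent to diagonal matrices. -/
theorem simultaneous_diagonalization_of_pencil (K : Type*) [Field K] (h2 : (2 : K) ≠ 0)
    (m : ℕ) (A B : Matrix (Fin m) (Fin m) K)
    (hA : A.IsSymm) (hBsymm : B.IsSymm) (hB : IsUnit B.det)
    (p : K[X])
    (hp : p = ((X : K[X]) • B.map Polynomial.C - A.map Polynomial.C).det)
    (hroots : p.roots.card = m ∧ p.roots.Nodup) :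
    ∃ P : Matrix (Fin m) (Fin m) K, IsUnit P.det ∧
      (Pᵀ * A * P).IsDiag ∧ (Pᵀ * B * P).IsDiag := by
  classical
  obtain ⟨hcard, hnodup⟩ := hroots
  have hs : p.roots.toFinset.card = m := by
    rw [Multiset.toFinset_card_of_nodup hnodup, hcard]
  let e : Fin m ≃ {x // x ∈ p.roots.toFinset} := (Finset.equivFinOfCardEq hs).symm
  set μ : Fin m → K := fun i => (e i : K) with hμdef
  have hμinj : Function.Injective μ := fun i j h => e.injective (Subtype.ext h)
  -- each μ i gives a singular pencil matrix
  have hμroot : ∀ i, (μ i • B - A).det = 0 := by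
    intro i
    have hmem : μ i ∈ p.roots := Multiset.mem_toFinset.mp (e i).2
    have hroot := (Polynomial.mem_roots'.mp hmem).2
    rw [hp] at hroot
    have hdet : ((Polynomial.evalRingHom (μ i)).mapMatrix
        ((X : K[X]) • B.map Polynomial.C - A.map Polynomial.C)).det = 0 := by
      rw [← RingHom.map_det]
      exact hroot
    convert hdet using 2
    ext j k
    simp only [RingHom.mapMatrix_apply, Matrix.map_apply, Matrix.sub_apply, Matrix.smul_apply,
      smul_eq_mul, Polynomial.coe_evalRingHom, Polynomial.eval_sub, Polynomial.eval_mul,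
      Polynomial.eval_X, Polynomial.eval_C]
  -- choose eigenvectors
  have hv : ∀ i, ∃ v : Fin m → K, v ≠ 0 ∧ A.mulVec v = μ i • B.mulVec v := by
    intro i
    obtain ⟨v, hv0, hveq⟩ := (Matrix.exists_mulVec_eq_zero_iff).mpr (hμroot i)
    refine ⟨v, hv0, ?_⟩
    have : (μ i • B).mulVec v - A.mulVec v = 0 := by
      rw [← Matrix.sub_mulVec]; exact hveq
    have h2' : μ i • B.mulVec v - A.mulVec v = 0 := by
      rwa [Matrix.smul_mulVec] at this
    linear_combination (norm := module) -h2'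
  choose v hv0 hveq using hv
  -- symmetry helpers
  have hsymmA : ∀ (x y : Fin m → K), x ⬝ᵥ A.mulVec y = A.mulVec x ⬝ᵥ y := by
    intro x y
    rw [Matrix.dotProduct_mulVec, ← Matrix.mulVec_transpose, hA.eq]
  have hsymmB : ∀ (x y : Fin m → K), x ⬝ᵥ B.mulVec y = B.mulVec x ⬝ᵥ y := by
    intro x y
    rw [Matrix.dotProduct_mulVec, ← Matrix.mulVec_transpose, hBsymm.eq]
  -- B-orthogonality of eigenvectors
  have horth : ∀ i j, i ≠ j → v i ⬝ᵥ B.mulVec (v j) = 0 := by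
    intro i j hij
    have h1 : v i ⬝ᵥ A.mulVec (v j) = μ j * (v i ⬝ᵥ B.mulVec (v j)) := by
      rw [hveq j, dotProduct_smul, smul_eq_mul]
    have hcomm : B.mulVec (v i) ⬝ᵥ v j = v i ⬝ᵥ B.mulVec (v j) := (hsymmB _ _).symm
    have h2' : v i ⬝ᵥ A.mulVec (v j) = μ i * (v i ⬝ᵥ B.mulVec (v j)) := by
      rw [hsymmA, hveq i, smul_dotProduct, smul_eq_mul, hcomm]
    have hsub : (μ i - μ j) * (v i ⬝ᵥ B.mulVec (v j)) = 0 := by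
      rw [sub_mul]
      rw [← h1, ← h2', sub_self]
    rcases mul_eq_zero.mp hsub with h | h
    · exact absurd (sub_eq_zero.mp h) (fun hh => hij (hμinj hh))
    · exact h
  -- the matrix of eigenvectors (rows)
  set Q : Matrix (Fin m) (Fin m) K := Matrix.of v with hQ
  refine ⟨Qᵀ, ?_, ?_, ?_⟩
  · -- invertibility via linear independence of eigenvectors
    rw [← Matrix.det_transpose, Matrix.transpose_transpose]
    have hBinv : B⁻¹ * B = 1 := Matrix.nonsing_inv_mul B hB
    have hEig : ∀ i, Module.End.HasEigenvector (R := K) (M := Fin m → K) (Matrix.mulVecLin (B⁻¹ * A)) (μ i) (v i) := by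
      intro i
      refine ⟨Module.End.mem_eigenspace_iff.mpr ?_, hv0 i⟩
      show (B⁻¹ * A).mulVec (v i) = μ i • v i
      rw [← Matrix.mulVec_mulVec, hveq i, Matrix.mulVec_smul, Matrix.mulVec_mulVec,
        hBinv, Matrix.one_mulVec]
    have hli : LinearIndependent K v :=
      Module.End.eigenvectors_linearIndependent' (R := K) (M := Fin m → K) (Matrix.mulVecLin (B⁻¹ * A)) μ hμinj v hEig
    have hQu : IsUnit Q := (Matrix.linearIndependent_rows_iff_isUnit (A := Q)).mp hli
    exact (Matrix.isUnit_iff_isUnit_det Q).mp hQu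
  · -- PᵀAP diagonal
    intro i j hij
    rw [Matrix.transpose_transpose]
    have : (Q * A * Qᵀ) i j = v i ⬝ᵥ A.mulVec (v j) := by
      simp [Matrix.mul_apply, Matrix.mulVec, dotProduct, hQ, Finset.sum_mul,
        Finset.mul_sum, mul_assoc]
      rw [Finset.sum_comm]
    rw [this, hveq j, dotProduct_smul, smul_eq_mul, horth i j hij, mul_zero]
  · intro i j hij
    rw [Matrix.transpose_transpose]
    have : (Q * B * Qᵀ) i j = v i ⬝ᵥ B.mulVec (v j) := by
      simp [Matrix.mul_apply, Matrix.mulVec, dotProduct, hQ, Finset.sum_mul,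
        Finset.mul_sum, mul_assoc]
      rw [Finset.sum_comm]
    rw [this, horth i j hij]
end
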